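/- arXiv:1904.11705 — 2 statements merged into one kernel-verified Lean document; each statement's English description precedes it below -/
import Mathlib

section
/- For the solid torus S = { (x,y,z) ∈ ℝ³ | (x²+y²+z²+3)² ≤ 16(x²+y²) }, the area v(t) of the planar slice S ∩ {x = t} satisfies v(0) = 2π, v(1) = 8, v(-1) = 8, and v(3) = v(-3) = 0. -/
/-!
Since `(y²+z²+3)² ≤ 16y²` means `(|y| - 2)² + z² ≤ 1`, the slice at `t = 0` is the union of the
two disjoint unit disks centred at `(±2, 0)`. At `t = ±1` the slice is the lemniscate
`(y²+z²)² ≤ 8(y²-z²)`, which in polar coordinates reads `r² ≤ 8 cos 2θ`; its area is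
`∫ max (4 cos 2θ) 0 dθ = 8`. At `t = ±3` the inequality forces `y = z = 0`.
-/

open MeasureTheory Real Set

theorem setLIntegral_Ioc_zero_ofReal {a : ℝ} (ha : 0 ≤ a) :
    ∫⁻ r in Ioc 0 a, ENNReal.ofReal r = ENNReal.ofReal (a ^ 2 / 2) := by
  rw [← ofReal_integral_eq_lintegral_ofReal, ← intervalIntegral.integral_of_le ha, integral_id]
  · ring_nf
  · exact continuous_id.integrableOn_Ioc
  · filter_upwards [ae_restrict_mem measurableSet_Ioc] with r hr using hr.1.le

/-- On a ray where `g θ ≤ 0` the set `S` is empty, matching the truncation in `ENNReal.ofReal`. -/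
theorem volume_eq_setLIntegral_of_polar {S : Set (ℝ × ℝ)} (hS : MeasurableSet S) {g : ℝ → ℝ}
    (hpolar : ∀ r θ, 0 < r → ((r * cos θ, r * sin θ) ∈ S ↔ r ^ 2 ≤ g θ)) :
    volume S = ∫⁻ θ in Ioo (-π) π, ENNReal.ofReal (g θ / 2) := by
  have radial : ∀ θ, ∫⁻ r in Ioi 0, ENNReal.ofReal r * S.indicator 1 (r * cos θ, r * sin θ)
      = ENNReal.ofReal (g θ / 2) := by
    intro θ
    have on_ray : EqOn (fun r => ENNReal.ofReal r * S.indicator 1 (r * cos θ, r * sin θ))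
        ((Iic √(g θ)).indicator ENNReal.ofReal) (Ioi 0) := by
      intro r hr
      have hmem : (r * cos θ, r * sin θ) ∈ S ↔ r ≤ √(g θ) :=
        (hpolar r θ hr).trans (le_sqrt' hr).symm
      by_cases hle : r ≤ √(g θ)
      · simp [hmem.2 hle, hle]
      · simp [mt hmem.1 hle, hle]
    rw [setLIntegral_congr_fun measurableSet_Ioi on_ray, lintegral_indicator measurableSet_Iic,
      Measure.restrict_restrict measurableSet_Iic, Iic_inter_Ioi,
      setLIntegral_Ioc_zero_ofReal (sqrt_nonneg _)]
    rcases le_total 0 (g θ) with hg | hg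
    · rw [sq_sqrt hg]
    · rw [sqrt_eq_zero'.2 hg, ENNReal.ofReal_of_nonpos (by linarith : g θ / 2 ≤ 0)]
      simp
  rw [← lintegral_indicator_one hS, ← lintegral_comp_polarCoord_symm, polarCoord_target,
    Measure.volume_eq_prod, ← Measure.prod_restrict, lintegral_prod_symm]
  · simp only [polarCoord_symm_apply, smul_eq_mul, radial]
  · exact ((by fun_prop : Measurable fun p : ℝ × ℝ => ENNReal.ofReal p.1).mul
      ((measurable_const.indicator hS).comp (by fun_prop))).aemeasurable

theorem integral_max_cos_two_mul_zero : ∫ θ in -π..π, max (cos (2 * θ)) 0 = 2 := by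
  set f : ℝ → ℝ := fun θ => max (cos (2 * θ)) 0
  have hf : Continuous f := by fun_prop
  have periodic : Function.Periodic f π := fun θ => by
    simp only [f, mul_add, cos_add_two_pi]
  have on_period : ∫ θ in -(π / 4)..-(π / 4) + π, f θ = 1 := by
    have positive : ∫ θ in -(π / 4)..π / 4, f θ = 1 := by
      rw [intervalIntegral.integral_congr (g := fun θ => cos (2 * θ)) fun θ hθ => ?_]
      · rw [intervalIntegral.integral_comp_mul_left cos two_ne_zero, integral_cos,
          show 2 * (π / 4) = π / 2 by ring, show 2 * -(π / 4) = -(π / 2) by ring,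
          sin_neg, sin_pi_div_two]
        norm_num
      · rw [uIcc_of_le (by linarith [pi_pos])] at hθ
        exact max_eq_left (cos_nonneg_of_mem_Icc ⟨by linarith [hθ.1], by linarith [hθ.2]⟩)
    have negative : ∫ θ in π / 4..-(π / 4) + π, f θ = 0 := by
      rw [intervalIntegral.integral_congr (g := fun _ => 0) fun θ hθ => ?_]
      · simp
      · rw [uIcc_of_le (by linarith [pi_pos])] at hθ
        exact max_eq_right (cos_nonpos_of_pi_div_two_le_of_le (by linarith [hθ.1])
          (by linarith [hθ.2]))
    rw [← intervalIntegral.integral_add_adjacent_intervals (hf.intervalIntegrable _ _)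
      (hf.intervalIntegrable _ _), positive, negative, add_zero]
  calc ∫ θ in -π..π, f θ = (∫ θ in -π..-π + π, f θ) + ∫ θ in 0..0 + π, f θ := by
        rw [neg_add_cancel, zero_add, intervalIntegral.integral_add_adjacent_intervals
          (hf.intervalIntegrable _ _) (hf.intervalIntegrable _ _)]
    _ = 2 := by
      rw [periodic.intervalIntegral_add_eq (-π) (-(π / 4)),
        periodic.intervalIntegral_add_eq 0 (-(π / 4)), on_period]
      norm_num

def lemniscate (c : ℝ) : Set (ℝ × ℝ) :=
  {q | (q.1 ^ 2 + q.2 ^ 2) ^ 2 ≤ c * (q.1 ^ 2 - q.2 ^ 2)}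

theorem measurableSet_lemniscate (c : ℝ) : MeasurableSet (lemniscate c) :=
  measurableSet_le (by fun_prop) (by fun_prop)

theorem polar_mem_lemniscate_iff (c : ℝ) {r : ℝ} (θ : ℝ) (hr : 0 < r) :
    (r * cos θ, r * sin θ) ∈ lemniscate c ↔ r ^ 2 ≤ c * cos (2 * θ) := by
  have hnorm : (r * cos θ) ^ 2 + (r * sin θ) ^ 2 = r ^ 2 := by
    linear_combination r ^ 2 * sin_sq_add_cos_sq θ
  have hdiff : (r * cos θ) ^ 2 - (r * sin θ) ^ 2 = r ^ 2 * cos (2 * θ) := by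
    linear_combination (-r ^ 2) * cos_two_mul' θ
  simp only [lemniscate, mem_ofPred_eq, hnorm, hdiff]
  rw [show (r ^ 2) ^ 2 = r ^ 2 * r ^ 2 by ring,
    show c * (r ^ 2 * cos (2 * θ)) = r ^ 2 * (c * cos (2 * θ)) by ring,
    mul_le_mul_iff_right₀ (by positivity)]

theorem volume_lemniscate {c : ℝ} (hc : 0 ≤ c) : volume (lemniscate c) = ENNReal.ofReal c := by
  rw [volume_eq_setLIntegral_of_polar (measurableSet_lemniscate c)
    fun r θ hr => polar_mem_lemniscate_iff c θ hr]
  have posPart : ∀ θ, ENNReal.ofReal (c * cos (2 * θ) / 2)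
      = ENNReal.ofReal (c / 2 * max (cos (2 * θ)) 0) := by
    intro θ
    rw [mul_max_of_nonneg _ _ (by positivity), mul_zero, ENNReal.ofReal_max, ENNReal.ofReal_zero,
      max_eq_left zero_le]
    ring_nf
  simp_rw [posPart]
  rw [← ofReal_integral_eq_lintegral_ofReal, integral_const_mul, ← integral_Ioc_eq_integral_Ioo,
    ← intervalIntegral.integral_of_le (by linarith [pi_pos]), integral_max_cos_two_mul_zero]
  · ring_nf
  · exact (by fun_prop : Continuous fun θ => c / 2 * max (cos (2 * θ)) 0).integrableOn_Icc
      |>.mono_set Ioo_subset_Icc_self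
  · exact Filter.Eventually.of_forall fun θ => by positivity

def closedDisk (c : ℝ × ℝ) (r : ℝ) : Set (ℝ × ℝ) :=
  {q | (q.1 - c.1) ^ 2 + (q.2 - c.2) ^ 2 ≤ r ^ 2}

theorem measurableSet_closedDisk (c : ℝ × ℝ) (r : ℝ) : MeasurableSet (closedDisk c r) :=
  measurableSet_le (by fun_prop) (by fun_prop)

theorem volume_closedDisk (c : ℝ × ℝ) {r : ℝ} (hr : 0 ≤ r) :
    volume (closedDisk c r) = ENNReal.ofReal (π * r ^ 2) := by
  have hball : Complex.measurableEquivRealProd ⁻¹' closedDisk c r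
      = Metric.closedBall (⟨c.1, c.2⟩ : ℂ) r := by
    ext z
    simp only [mem_preimage, closedDisk, mem_ofPred_eq, Metric.mem_closedBall,
      Complex.dist_eq_re_im, sqrt_le_left hr, Complex.measurableEquivRealProd_apply]
  rw [← Complex.volume_preserving_equiv_real_prod.measure_preimage
    (measurableSet_closedDisk c r).nullMeasurableSet, hball, Complex.volume_closedBall,
    ENNReal.ofReal_mul pi_pos.le, ← NNReal.coe_real_pi, ENNReal.ofReal_coe_nnreal,
    ENNReal.ofReal_pow hr, mul_comm]

def torusSlice (t : ℝ) : Set (ℝ × ℝ) :=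
  {q | (t ^ 2 + q.1 ^ 2 + q.2 ^ 2 + 3) ^ 2 ≤ 16 * (t ^ 2 + q.1 ^ 2)}

theorem torusSlice_zero : torusSlice 0 = closedDisk (2, 0) 1 ∪ closedDisk (-2, 0) 1 := by
  ext q
  simp only [torusSlice, closedDisk, mem_union, mem_ofPred_eq]
  constructor
  · intro h
    rcases le_or_gt 0 q.1 with hq | hq
    · left; nlinarith [sq_nonneg (q.1 ^ 2 + q.2 ^ 2 + 3 + 4 * q.1)]
    · right; nlinarith [sq_nonneg (q.1 ^ 2 + q.2 ^ 2 + 3 - 4 * q.1)]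
  · rintro (h | h) <;> nlinarith [sq_nonneg q.1, sq_nonneg q.2]

theorem volume_torusSlice_zero : volume (torusSlice 0) = ENNReal.ofReal (2 * π) := by
  have hdisj : Disjoint (closedDisk (2, 0) 1) (closedDisk (-2, 0) 1) := by
    refine disjoint_left.2 fun q hq hq' => ?_
    simp only [closedDisk, mem_ofPred_eq] at hq hq'
    nlinarith [sq_nonneg q.2]
  rw [torusSlice_zero, measure_union hdisj (measurableSet_closedDisk _ _),
    volume_closedDisk _ zero_le_one, volume_closedDisk _ zero_le_one,
    ← ENNReal.ofReal_add (by positivity) (by positivity)]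
  ring_nf

theorem torusSlice_of_sq_eq_one {t : ℝ} (ht : t ^ 2 = 1) : torusSlice t = lemniscate 8 := by
  ext q
  simp only [torusSlice, lemniscate, mem_ofPred_eq, ht]
  constructor <;> intro h <;> nlinarith

theorem torusSlice_subset_zero_of_sq_eq_nine {t : ℝ} (ht : t ^ 2 = 9) : torusSlice t ⊆ {0} := by
  intro q hq
  simp only [torusSlice, mem_ofPred_eq, ht] at hq
  have h1 : q.1 = 0 := by nlinarith [sq_nonneg q.1, sq_nonneg q.2, sq_nonneg (q.1 ^ 2 + q.2 ^ 2)]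
  have h2 : q.2 = 0 := by nlinarith [sq_nonneg q.1, sq_nonneg q.2, sq_nonneg (q.1 ^ 2 + q.2 ^ 2)]
  exact Prod.ext h1 h2

/-- Special values of the slice-area function of the solid torus
`(x²+y²+z²+3)² ≤ 16(x²+y²)`. -/
theorem torus_slice_areas
    (v : ℝ → ENNReal)
    (hv : ∀ t : ℝ, v t = volume {q : ℝ × ℝ |
        (t ^ 2 + q.1 ^ 2 + q.2 ^ 2 + 3) ^ 2 ≤ 16 * (t ^ 2 + q.1 ^ 2)}) :
    v 0 = ENNReal.ofReal (2 * π) ∧ v 1 = 8 ∧ v (-1) = 8 ∧ v 3 = 0 ∧ v (-3) = 0 := by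
  have hv' : ∀ t, v t = volume (torusSlice t) := hv
  have lemniscate_slice : ∀ t : ℝ, t ^ 2 = 1 → v t = 8 := fun t ht => by
    rw [hv', torusSlice_of_sq_eq_one ht, volume_lemniscate (by norm_num), ENNReal.ofReal_ofNat]
  have point_slice : ∀ t : ℝ, t ^ 2 = 9 → v t = 0 := fun t ht =>
    (hv' t).trans (measure_mono_null (torusSlice_subset_zero_of_sq_eq_nine ht)
      (measure_singleton 0))
  exact ⟨(hv' 0).trans volume_torusSlice_zero, lemniscate_slice 1 (by norm_num),
    lemniscate_slice (-1) (by norm_num), point_slice 3 (by norm_num),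
    point_slice (-3) (by norm_num)⟩
end

section
/- Let K ⊂ ℝ^n be compact and let f : ℂ^n → ℂ be a polynomial with f real on ℝ^n, such that K ⊂ { f = 0 } ∩ ℝ^n and ∇f(p) ≠ 0 for all p ∈ K. Then there exists ε₀ > 0 such that f(p + u∇f(p)) ≠ 0 for all p ∈ K and all u ∈ ℂ with 0 < |u| ≤ ε₀ (with ℂ-scalar multiplication in ℂ^n ≅ ℝ^n ⊗ ℂ). -/
open MvPolynomial

namespace LerayAux

/-- A complex polynomial vanishing at all real points is zero. -/
lemma eval_real_zero : ∀ {m : ℕ} (g : MvPolynomial (Fin m) ℂ),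
    (∀ x : Fin m → ℝ, eval (fun i => (x i : ℂ)) g = 0) → g = 0 := by
  intro m
  induction m with
  | zero =>
    intro g h
    obtain ⟨c, rfl⟩ := C_surjective (Fin 0) g
    simpa using h (fun _ => 0)
  | succ m ih =>
    intro g h
    have hq : finSuccEquiv ℂ m g = 0 := by
      apply Polynomial.ext
      intro k
      simp only [Polynomial.coeff_zero]
      apply ih
      intro s
      have hpoly : (finSuccEquiv ℂ m g).map (eval (fun i => (s i : ℂ))) = 0 := by
        apply Polynomial.eq_zero_of_infinite_isRoot
        apply (Set.infinite_range_of_injective Complex.ofReal_injective).mono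
        rintro z ⟨y, rfl⟩
        have hx : (fun i => ((Fin.cons y s : Fin (m + 1) → ℝ) i : ℂ))
            = Fin.cons (y : ℂ) (fun i => (s i : ℂ)) := by
          funext i
          refine Fin.cases ?_ ?_ i <;> simp
        have := h (Fin.cons y s)
        rw [hx, eval_eq_eval_mv_eval'] at this
        exact this
      have := congrArg (fun P => Polynomial.coeff P k) hpoly
      simpa using this
    have := (finSuccEquiv ℂ m).injective (hq.trans (map_zero _).symm)
    simpa using this

lemma conj_eval {m : ℕ} (g : MvPolynomial (Fin m) ℂ) (x : Fin m → ℝ) :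
    eval (fun i => (x i : ℂ)) (map (starRingEnd ℂ) g)
      = starRingEnd ℂ (eval (fun i => (x i : ℂ)) g) := by
  rw [← eval₂_eq_eval_map]
  have := eval₂_comp_left (starRingEnd ℂ) (RingHom.id ℂ) (fun i => ((x i : ℂ))) g
  rw [eval₂_id] at this
  have hx : (⇑(starRingEnd ℂ) ∘ fun i => ((x i : ℂ))) = fun i => ((x i : ℂ)) := by
    funext i; simp [Complex.conj_ofReal]
  rw [RingHom.comp_id, hx] at this
  exact this.symm

lemma coeff_mul_one' {S : Type*} [CommSemiring S] (P Q : Polynomial S) :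
    (P * Q).coeff 1 = P.coeff 0 * Q.coeff 1 + P.coeff 1 * Q.coeff 0 := by
  rw [Polynomial.coeff_mul, Finset.Nat.sum_antidiagonal_eq_sum_range_succ_mk]
  simp [Finset.sum_range_succ]

lemma coeffs_aeval {n : ℕ} {S : Type*} [CommSemiring S] [Algebra ℂ S]
    (a b : Fin n → S) (q : MvPolynomial (Fin n) ℂ) :
    (aeval (fun i => Polynomial.C (a i) + Polynomial.X * Polynomial.C (b i)) q).coeff 0
        = aeval a q ∧
    (aeval (fun i => Polynomial.C (a i) + Polynomial.X * Polynomial.C (b i)) q).coeff 1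
        = ∑ i, b i * aeval a (pderiv i q) := by
  induction q using MvPolynomial.induction_on with
  | C c =>
    constructor <;> simp [Polynomial.algebraMap_apply, Polynomial.coeff_C]
  | add p q hp hq =>
    constructor
    · simp only [map_add, Polynomial.coeff_add, hp.1, hq.1]
    · simp only [map_add, Polynomial.coeff_add, hp.2, hq.2, mul_add, Finset.sum_add_distrib]
  | mul_X p j hp =>
    have hs0 : (Polynomial.C (a j) + Polynomial.X * Polynomial.C (b j)).coeff 0 = a j := by
      simp [Polynomial.mul_coeff_zero]
    have hs1 : (Polynomial.C (a j) + Polynomial.X * Polynomial.C (b j)).coeff 1 = b j := by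
      simp [Polynomial.coeff_X_mul, Polynomial.coeff_C]
    constructor
    · rw [map_mul, aeval_X, Polynomial.mul_coeff_zero, hp.1, hs0, map_mul, aeval_X]
    · rw [map_mul, aeval_X, coeff_mul_one', hp.1, hp.2, hs0, hs1]
      classical
      have key : ∀ i : Fin n, b i * aeval a (pderiv i (p * X j))
          = b i * (aeval a (pderiv i p) * a j) + (if j = i then b i * aeval a p else 0) := by
        intro i
        rw [pderiv_mul, map_add, map_mul, map_mul, aeval_X, pderiv_X, Pi.single_apply]
        by_cases h : j = i <;> simp [h] <;> ring
      rw [Finset.sum_congr rfl (fun i _ => key i), Finset.sum_add_distrib,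
        Finset.sum_ite_eq Finset.univ j (fun i => b i * aeval a p)]
      simp only [Finset.mem_univ, if_true, ← mul_assoc, ← Finset.sum_mul]
      ring

end LerayAux

/-- Existence of a Leray tube: if `f` is a complex polynomial taking real values on
`ℝ^n`, `K` is a compact subset of the real zero set of `f`, and the gradient `∇f` does
not vanish on `K`, then there is `ε₀ > 0` such that `f(p + u∇f(p)) ≠ 0` for all `p ∈ K`
and all `u ∈ ℂ` with `0 < |u| ≤ ε₀`. -/
theorem leray_tube_exists (n : ℕ) (f : MvPolynomial (Fin n) ℂ)
    (hreal : ∀ x : Fin n → ℝ, (eval (fun i => (x i : ℂ)) f).im = 0)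
    (K : Set (Fin n → ℝ)) (hK : IsCompact K)
    (hKzero : ∀ p ∈ K, eval (fun i => (p i : ℂ)) f = 0)
    (hgrad : ∀ p ∈ K, ∃ i, eval (fun i => (p i : ℂ)) (pderiv i f) ≠ 0) :
    ∃ ε₀ > 0, ∀ p ∈ K, ∀ u : ℂ, 0 < ‖u‖ → ‖u‖ ≤ ε₀ →
      eval (fun i => (p i : ℂ) + u * eval (fun j => (p j : ℂ)) (pderiv i f)) f ≠ 0 := by
  classical
  set P : Polynomial (MvPolynomial (Fin n) ℂ) :=
    aeval (fun i => Polynomial.C (X i) + Polynomial.X * Polynomial.C (pderiv i f)) f with hP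
  obtain ⟨hc0, hc1⟩ :=
    LerayAux.coeffs_aeval (fun i => (X i : MvPolynomial (Fin n) ℂ)) (fun i => pderiv i f) f
  have hc0' : P.coeff 0 = f := by
    rw [hP, hc0, aeval_X_left_apply]
  have hc1' : P.coeff 1 = ∑ i, pderiv i f * pderiv i f := by
    rw [hP, hc1]
    exact Finset.sum_congr rfl fun i _ => by rw [aeval_X_left_apply]
  -- conjugation-invariance of f
  have hconjf : map (starRingEnd ℂ) f = f := by
    have h0 := LerayAux.eval_real_zero (f - map (starRingEnd ℂ) f) (fun x => by
      rw [map_sub, LerayAux.conj_eval, Complex.conj_eq_iff_im.mpr (hreal x), sub_self])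
    exact (sub_eq_zero.mp h0).symm
  have hdreal : ∀ (p : Fin n → ℝ) (i : Fin n),
      eval (fun j => (p j : ℂ)) (pderiv i f)
        = (((eval (fun j => (p j : ℂ)) (pderiv i f)).re : ℝ) : ℂ) := by
    intro p i
    have : (starRingEnd ℂ) (eval (fun j => (p j : ℂ)) (pderiv i f))
        = eval (fun j => (p j : ℂ)) (pderiv i f) := by
      rw [← LerayAux.conj_eval, ← pderiv_map, hconjf]
    exact (Complex.conj_eq_iff_re.mp this).symm
  set N := P.natDegree with hN
  set h : (Fin n → ℝ) × ℂ → ℂ :=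
    fun z => ∑ k ∈ Finset.range (N + 1),
      eval (fun i => ((z.1 i : ℝ) : ℂ)) (P.coeff (k + 1)) * z.2 ^ k with hh
  -- the key evaluation identity
  have keyeval : ∀ (p : Fin n → ℝ) (u : ℂ),
      Polynomial.eval u (P.map (eval (fun i => (p i : ℂ)))) =
        eval (fun i => (p i : ℂ) + u * eval (fun j => (p j : ℂ)) (pderiv i f)) f := by
    intro p u
    have h1 : Polynomial.eval u (P.map (eval (fun i => (p i : ℂ))))
        = ((Polynomial.evalRingHom u).comp
            (Polynomial.mapRingHom (eval (fun i => (p i : ℂ))))) P := rfl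
    rw [h1, hP, aeval_def, eval₂_comp_left]
    have h2 : ((Polynomial.evalRingHom u).comp
          (Polynomial.mapRingHom (eval (fun i => (p i : ℂ))))).comp
        (algebraMap ℂ (Polynomial (MvPolynomial (Fin n) ℂ))) = RingHom.id ℂ := by
      ext c
      simp [Polynomial.algebraMap_apply, MvPolynomial.algebraMap_eq]
    have h3 : (⇑((Polynomial.evalRingHom u).comp
          (Polynomial.mapRingHom (eval (fun i => (p i : ℂ))))) ∘
        fun i => Polynomial.C (X i) + Polynomial.X * Polynomial.C (pderiv i f))
        = fun i => (p i : ℂ) + u * eval (fun j => (p j : ℂ)) (pderiv i f) := by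
      funext i
      simp only [Function.comp_apply, RingHom.coe_comp, Polynomial.coe_mapRingHom,
        Polynomial.map_add, Polynomial.map_mul, Polynomial.map_C, Polynomial.map_X,
        Polynomial.coe_evalRingHom, Polynomial.eval_add, Polynomial.eval_mul,
        Polynomial.eval_C, Polynomial.eval_X, eval_X]
    rw [h2, h3, eval₂_id]
  -- splitting off the constant coefficient
  have split : ∀ (p : Fin n → ℝ) (u : ℂ),
      Polynomial.eval u (P.map (eval (fun i => (p i : ℂ))))
        = eval (fun i => (p i : ℂ)) (P.coeff 0) + u * h (p, u) := by
    intro p u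
    have hdeg : (P.map (eval (fun i => (p i : ℂ)))).natDegree < N + 2 :=
      lt_of_le_of_lt Polynomial.natDegree_map_le (by rw [hN]; omega)
    rw [Polynomial.eval_eq_sum_range' hdeg, Finset.sum_range_succ']
    simp only [Polynomial.coeff_map, pow_zero, mul_one, hh, Finset.mul_sum]
    rw [add_comm]
    congr 1
    exact Finset.sum_congr rfl fun k _ => by ring
  have hval0 : ∀ p : Fin n → ℝ, h (p, 0) = eval (fun i => (p i : ℂ)) (P.coeff 1) := by
    intro p
    rw [hh]
    simp only
    rw [Finset.sum_eq_single 0]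
    · simp
    · intro k _ hk
      simp [zero_pow hk]
    · intro habs
      exact absurd (Finset.mem_range.mpr (Nat.succ_pos N)) habs
  have hK0 : ∀ p ∈ K, h (p, 0) ≠ 0 := by
    intro p hp
    rw [hval0, hc1', map_sum]
    obtain ⟨i₀, hi₀⟩ := hgrad p hp
    have hterm : ∀ i : Fin n, eval (fun j => (p j : ℂ)) (pderiv i f * pderiv i f)
        = ((((eval (fun j => (p j : ℂ)) (pderiv i f)).re
            * (eval (fun j => (p j : ℂ)) (pderiv i f)).re : ℝ)) : ℂ) := by
      intro i
      rw [map_mul, Complex.ofReal_mul, ← hdreal p i]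
    rw [Finset.sum_congr rfl fun i _ => hterm i, ← Complex.ofReal_sum]
    rw [Complex.ofReal_ne_zero]
    have hpos : 0 < ∑ i : Fin n, (eval (fun j => (p j : ℂ)) (pderiv i f)).re
        * (eval (fun j => (p j : ℂ)) (pderiv i f)).re := by
      apply Finset.sum_pos' (fun i _ => mul_self_nonneg _)
      refine ⟨i₀, Finset.mem_univ _, ?_⟩
      have : (eval (fun j => (p j : ℂ)) (pderiv i₀ f)).re ≠ 0 := by
        intro hre
        apply hi₀
        rw [hdreal p i₀, hre]
        simp
      exact mul_self_pos.mpr this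
    exact ne_of_gt hpos
  have hcont : Continuous h := by
    rw [hh]
    apply continuous_finset_sum
    intro k _
    exact ((MvPolynomial.continuous_eval (p := P.coeff (k + 1))).comp
      (continuous_pi fun i =>
        Complex.continuous_ofReal.comp ((continuous_apply i).comp continuous_fst))).mul
      (continuous_snd.pow k)
  have hUopen : IsOpen {z : (Fin n → ℝ) × ℂ | h z ≠ 0} := by
    have : {z : (Fin n → ℝ) × ℂ | h z ≠ 0} = h ⁻¹' ({0}ᶜ) := rfl
    rw [this]
    exact isOpen_compl_singleton.preimage hcont
  have hCsub : K ×ˢ ({0} : Set ℂ) ⊆ {z | h z ≠ 0} := by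
    rintro ⟨p, u⟩ ⟨hp, hu⟩
    have : u = 0 := hu
    subst this
    exact hK0 p hp
  obtain ⟨δ, δpos, hδ⟩ :=
    (hK.prod isCompact_singleton).exists_thickening_subset_open hUopen hCsub
  refine ⟨δ / 2, by positivity, ?_⟩
  intro p hp u hu1 hu2
  have hu0 : u ≠ 0 := by
    intro h0
    rw [h0, norm_zero] at hu1
    exact lt_irrefl 0 hu1
  have hmem : (p, u) ∈ Metric.thickening δ (K ×ˢ ({0} : Set ℂ)) := by
    rw [Metric.mem_thickening_iff]
    refine ⟨(p, 0), ⟨hp, rfl⟩, ?_⟩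
    rw [Prod.dist_eq]
    simp only [dist_self, dist_zero_right]
    exact max_lt δpos (lt_of_le_of_lt hu2 (by linarith))
  have hne : h (p, u) ≠ 0 := hδ hmem
  have hfinal : Polynomial.eval u (P.map (eval (fun i => (p i : ℂ)))) ≠ 0 := by
    rw [split p u, hc0', hKzero p hp, zero_add]
    exact mul_ne_zero hu0 hne
  rw [keyeval p u] at hfinal
  exact hfinal
end
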